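/- arXiv:1012.4359 — 2 statements merged into one kernel-verified Lean document; each statement's English description precedes it below -/
import Mathlib

section
/- The map ψ_W: ℝ × T*S^k × ℝ^{2(n-k-1)} → S_{-1}, (ζ, q, p, x, y) ↦ (x, y; ζq + p, q), where S_{-1} = {(x,y,z,w) : |w|² = 1} ⊂ ℝ^{2n}, is a strict contactomorphism: the pullback under ψ_W of the 1-form (1/2)(x dy - y dx) + 2z dw + w dz equals (1/2)(x dy - y dx) + p dq + dζ. -/
noncomputable section

open Finset

def dot {m : ℕ} (a b : Fin m → ℝ) : ℝ := ∑ i, a i * b i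

/-- Coordinates `(x, y, z, w)` on `ℝ^{2n}` with `a` pairs `(x,y)` and `b` pairs `(z,w)`. -/
abbrev Ecoord (a b : ℕ) := (Fin a → ℝ) × (Fin a → ℝ) × (Fin b → ℝ) × (Fin b → ℝ)

/-- The contact form `α = (1/2)(x dy - y dx) + 2 z dw + w dz` (restricted to `S₋₁`). -/
def alphaForm {a b : ℕ} (p v : Ecoord a b) : ℝ :=
  (1/2) * (dot p.1 v.2.1 - dot p.2.1 v.1) + 2 * dot p.2.2.1 v.2.2.2 + dot p.2.2.2 v.2.2.1

/-- Coordinates `(ζ, q, p, x, y)` on `ℝ × T*S^k × ℝ^{2(n-k-1)}` (ambiently, on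
`ℝ × ℝ^{k+1} × ℝ^{k+1} × ℝ^{a} × ℝ^{a}`). -/
abbrev Dom (k a : ℕ) := ℝ × (Fin (k+1) → ℝ) × (Fin (k+1) → ℝ) × (Fin a → ℝ) × (Fin a → ℝ)

/-- The map `ψ_W : (ζ, q, p, x, y) ↦ (x, y; ζq + p, q)` into `S₋₁ = {|w|² = 1}`. -/
def psiW {k a : ℕ} (d : Dom k a) : Ecoord a (k+1) :=
  (d.2.2.2.1, d.2.2.2.2, d.1 • d.2.1 + d.2.2.1, d.2.1)

open scoped Matrix

lemma dot_eq_dotProduct {m : ℕ} (u v : Fin m → ℝ) : dot u v = u ⬝ᵥ v := rfl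

lemma fderiv_psiW_apply {k a : ℕ} (d t : Dom k a) :
    fderiv ℝ (psiW (k := k) (a := a)) d t =
      (t.2.2.2.1, t.2.2.2.2, d.1 • t.2.1 + t.1 • d.2.1 + t.2.2.1, t.2.1) := by
  have hd := hasFDerivAt_id (𝕜 := ℝ) d
  have hq := hd.snd.fst
  have H : HasFDerivAt psiW _ d := hd.snd.snd.snd.fst.prodMk
    (hd.snd.snd.snd.snd.prodMk (((hd.fst.smul hq).add hd.snd.snd.fst).prodMk hq))
  rw [H.fderiv]
  simp

/-- On `T*S^k`, the term `2z dw + w dz` pulls back under `(ζ, q, p) ↦ (ζq + p, q)` to `p dq + dζ`: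
`q·dq = 0` kills both `ζ q·dq` terms and `q·dp = -p·dq` turns `2p·dq + q·dp` into `p·dq`. -/
lemma two_mul_dot_add_dot_eq_of_mem_cotangentSphere {m : ℕ} {ζ ζ' : ℝ} {q p q' p' : Fin m → ℝ}
    (hq : dot q q = 1) (hqq' : dot q q' = 0) (hqp' : dot q' p + dot q p' = 0) :
    2 * dot (ζ • q + p) q' + dot q (ζ • q' + ζ' • q + p') = dot p q' + ζ' := by
  simp only [dot_eq_dotProduct, add_dotProduct, dotProduct_add, smul_dotProduct,
    dotProduct_smul, smul_eq_mul] at *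
  rw [dotProduct_comm q' p] at hqp'
  rw [hq, hqq']
  linarith

theorem stmt4_general (k a : ℕ) (d : Dom k a)
    (hq : dot d.2.1 d.2.1 = 1)
    (t : Dom k a)
    (htq : dot d.2.1 t.2.1 = 0)
    (htp : dot t.2.1 d.2.2.1 + dot d.2.1 t.2.2.1 = 0) :
    alphaForm (psiW d) (fderiv ℝ (psiW (k := k) (a := a)) d t) =
      (1/2) * (dot d.2.2.2.1 t.2.2.2.2 - dot d.2.2.2.2 t.2.2.2.1)
        + dot d.2.2.1 t.2.1 + t.1 := by
  have hzw := two_mul_dot_add_dot_eq_of_mem_cotangentSphere (ζ := d.1) (ζ' := t.1) hq htq htp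
  rw [fderiv_psiW_apply]
  simp only [alphaForm, psiW]
  linarith

/-- `ψ_W` is a strict contactomorphism: the pullback of
`(1/2)(x dy - y dx) + 2z dw + w dz` under `ψ_W` equals `(1/2)(x dy - y dx) + p dq + dζ`
(on points of `T*S^k`, i.e. `q·q = 1`, `q·p = 0`, and tangent vectors thereof). -/
theorem stmt4 (k a : ℕ) (d : Dom k a)
    (hq : dot d.2.1 d.2.1 = 1) (hqp : dot d.2.1 d.2.2.1 = 0)
    (t : Dom k a)
    (htq : dot d.2.1 t.2.1 = 0)
    (htp : dot t.2.1 d.2.2.1 + dot d.2.1 t.2.2.1 = 0) :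
    alphaForm (psiW d) (fderiv ℝ (psiW (k := k) (a := a)) d t) =
      (1/2) * (dot d.2.2.2.1 t.2.2.2.2 - dot d.2.2.2.2 t.2.2.2.1)
        + dot d.2.2.1 t.2.1 + t.1 :=
  stmt4_general k a d hq t htq htp
end
end

section
/- Monodromy after surgery (limit computation): define the map on points (z₋, w₋) with |w₋|² = 1, z₋ ≠ 0 by (z₋, w₋) ↦ (z₋, w₋ + 2ε z₋/|z₋|²). Writing z₋ = -ε w₋ + r₋ with w₋·r₋ = 0, and decomposing the image as z₊ = ε w₊ + r₊ with |w₊| = 1, w₊·r₊ = 0, one obtains w₊ = ((r₋² - ε²)/(r₋² + ε²)) w₋ + (2ε/(r₋² + ε²)) r₋ and r₊ = (-2ε r₋²/(r₋² + ε²)) w₋ + ((r₋² - ε²)/(r₋² + ε²)) r₋, where r₋² = |r₋|². -/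
noncomputable section

open Finset

lemma dot_comm {m : ℕ} (a b : Fin m → ℝ) : dot a b = dot b a := by
  unfold dot; exact Finset.sum_congr rfl (fun i _ => mul_comm _ _)

lemma dot_add_left {m : ℕ} (a b c : Fin m → ℝ) : dot (a + b) c = dot a c + dot b c := by
  unfold dot; rw [← Finset.sum_add_distrib]
  exact Finset.sum_congr rfl (fun i _ => by simp [add_mul])

lemma dot_add_right {m : ℕ} (a b c : Fin m → ℝ) : dot a (b + c) = dot a b + dot a c := by
  rw [dot_comm, dot_add_left, dot_comm b a, dot_comm c a]

lemma dot_smul_left {m : ℕ} (t : ℝ) (a b : Fin m → ℝ) : dot (t • a) b = t * dot a b := by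
  unfold dot; rw [Finset.mul_sum]
  exact Finset.sum_congr rfl (fun i _ => by simp [mul_assoc])

lemma dot_smul_right {m : ℕ} (t : ℝ) (a b : Fin m → ℝ) : dot a (t • b) = t * dot a b := by
  rw [dot_comm, dot_smul_left, dot_comm b a]

lemma dot_self_pos {m : ℕ} (a : Fin m → ℝ) (ha : a ≠ 0) : 0 < dot a a := by
  have h1 : 0 ≤ dot a a := Finset.sum_nonneg (fun i _ => mul_self_nonneg _)
  rcases h1.lt_or_eq with h | h
  · exact h
  · exfalso; apply ha
    funext i
    have := (Finset.sum_eq_zero_iff_of_nonneg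
      (fun i _ => mul_self_nonneg (a i))).1 h.symm i (Finset.mem_univ i)
    simpa using mul_self_eq_zero.mp this

/-- the surgered monodromy `(z₋, w₋) ↦ (z₋, w₋ + 2ε z₋/|z₋|²)` in the
decomposition `z₋ = -ε w₋ + r₋`, `z₊ = ε w₊ + r₊` is given by the stated rotation-type
formulas. -/
theorem stmt16 (n : ℕ) (ε : ℝ) (hε : 0 < ε) (w r : Fin (n+1) → ℝ)
    (hw : dot w w = 1) (hwr : dot w r = 0) (hr : r ≠ 0)
    (z wp rp : Fin (n+1) → ℝ)
    (hz : z = (-ε) • w + r)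
    (hwp : wp = w + (2 * ε / dot z z) • z)
    (hrp : rp = z - ε • wp) :
    dot z z = dot r r + ε^2 ∧
    dot wp wp = 1 ∧
    dot wp rp = 0 ∧
    dot z wp = ε ∧
    wp = ((dot r r - ε^2) / (dot r r + ε^2)) • w + (2 * ε / (dot r r + ε^2)) • r ∧
    rp = (-(2 * ε * dot r r) / (dot r r + ε^2)) • w
          + ((dot r r - ε^2) / (dot r r + ε^2)) • r := by
  set R := dot r r with hRdef
  have hrw : dot r w = 0 := by rw [dot_comm]; exact hwr
  have hRpos : 0 < R := dot_self_pos r hr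
  have hden : R + ε ^ 2 ≠ 0 := by positivity
  have hzz : dot z z = R + ε ^ 2 := by
    subst hz
    rw [dot_add_left, dot_add_right, dot_add_right, dot_smul_left, dot_smul_left,
      dot_smul_right, dot_smul_right, hw, hwr, hrw]
    ring
  have hwpf : wp = ((R - ε^2) / (R + ε^2)) • w + (2 * ε / (R + ε^2)) • r := by
    rw [hwp, hzz, hz]
    funext i
    simp only [Pi.add_apply, Pi.smul_apply, smul_eq_mul, Pi.neg_apply]
    field_simp
    ring
  have hdw : dot w wp = (R - ε^2) / (R + ε^2) := by
    rw [hwpf, dot_add_right, dot_smul_right, dot_smul_right, hw, hwr]; ring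
  have hdr : dot r wp = 2 * ε * R / (R + ε^2) := by
    rw [hwpf, dot_add_right, dot_smul_right, dot_smul_right, hrw]; ring
  have hww : dot wp wp = 1 := by
    nth_rewrite 1 [hwpf]
    rw [dot_add_left, dot_smul_left, dot_smul_left, hdw, hdr]
    field_simp
    ring
  have hzwp : dot z wp = ε := by
    rw [hz, dot_add_left, dot_smul_left, hdw, hdr]
    field_simp
    ring
  have hrpf : rp = (-(2 * ε * R) / (R + ε^2)) • w + ((R - ε^2) / (R + ε^2)) • r := by
    rw [hrp, hwpf, hz]
    funext i
    simp only [Pi.add_apply, Pi.sub_apply, Pi.smul_apply, smul_eq_mul, Pi.neg_apply]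
    field_simp
    ring
  have hwprp : dot wp rp = 0 := by
    rw [hrpf, dot_add_right, dot_smul_right, dot_smul_right, dot_comm wp w, hdw,
      dot_comm wp r, hdr]
    field_simp
    ring
  exact ⟨hzz, hww, hwprp, hzwp, hwpf, hrpf⟩
end
end
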